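/- Let ν ∈ Λ with (ν,e₁) = (ν,e₂) = 0, let a₁, a₂ ∈ ℤ, and set ξ := a₁e₁ + a₂e₂ + ν. Assume (ξ,ξ) = −2. Then (r_ζ ∘ r_ξ ∘ r_ζ(e₁), e₁) = −(2/25)·(18a₁² − 48a₁a₂ + 32a₂² − 25) and (r_ζ ∘ r_ξ ∘ r_ζ(e₁), e₂) = (2/25)·(24a₁² − 14a₁a₂ − 24a₂²); moreover 18a₁² − 48a₁a₂ + 32a₂² = 2(3a₁ − 4a₂)². -/

import Mathlib

/-!
Reflections are self-adjoint, so `(r_ζ r_ξ r_ζ e₁, eᵢ) = (r_ξ u, r_ζ eᵢ)` with `u = r_ζ e₁`.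
Explicitly `r_ζ e₁ = (−3e₁ + 4e₂)/5` and `r_ζ e₂ = (4e₁ + 3e₂)/5`, an orthogonal pair of square `−2`,
and since `(ξ,ξ) = −2` the reflection is `r_ξ x = −x − (x,ξ)ξ`. Hence both values are
`−(u, r_ζ eᵢ) − (u,ξ)(r_ζ eᵢ,ξ)`, where `(u,ξ) = (6a₁ − 8a₂)/5` and `(r_ζ e₂,ξ) = −(8a₁ + 6a₂)/5`.
-/

/-- The involution `r_γ(x) = −x + (2(x,γ)/(γ,γ))·γ` of a rational quadratic space, with
`(+1)`-eigenspace `ℚγ` and `(−1)`-eigenspace `γ^⊥`. -/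
noncomputable def reflAlong {V : Type*} [AddCommGroup V] [Module ℚ V]
    (B : V →ₗ[ℚ] V →ₗ[ℚ] ℚ) (γ : V) (x : V) : V :=
  -x + ((2 * B x γ) / B γ γ) • γ

section reflAlong

variable {V : Type*} [AddCommGroup V] [Module ℚ V] {B : V →ₗ[ℚ] V →ₗ[ℚ] ℚ}

theorem reflAlong_apply_left (γ x y : V) :
    B (reflAlong B γ x) y = -B x y + 2 * B x γ / B γ γ * B γ y := by
  simp [reflAlong]

theorem apply_reflAlong (hsymm : ∀ x y : V, B x y = B y x) (γ x y : V) :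
    B x (reflAlong B γ y) = B (reflAlong B γ x) y := by
  rw [hsymm, reflAlong_apply_left, reflAlong_apply_left, hsymm y x, hsymm γ x, hsymm γ y]
  ring

theorem reflAlong_apply_left_of_self_eq_neg_two (hsymm : ∀ x y : V, B x y = B y x) {γ : V}
    (hγ : B γ γ = -2) (x y : V) :
    B (reflAlong B γ x) y = -B x y - B x γ * B y γ := by
  rw [reflAlong_apply_left, hγ, hsymm γ y]
  ring

variable {e₁ e₂ : V}

theorem reflAlong_add_two_smul_apply_left (hsymm : ∀ x y : V, B x y = B y x)
    (h11 : B e₁ e₁ = -2) (h22 : B e₂ e₂ = -2) (h12 : B e₁ e₂ = 0) :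
    reflAlong B (e₁ + (2 : ℚ) • e₂) e₁ = -(3 / 5 : ℚ) • e₁ + (4 / 5 : ℚ) • e₂ := by
  have h21 : B e₂ e₁ = 0 := (hsymm _ _).trans h12
  simp only [reflAlong, map_add, map_smul, LinearMap.add_apply, LinearMap.smul_apply,
    smul_eq_mul, h11, h22, h12, h21, smul_add, smul_smul]
  module

theorem reflAlong_add_two_smul_apply_right (hsymm : ∀ x y : V, B x y = B y x)
    (h11 : B e₁ e₁ = -2) (h22 : B e₂ e₂ = -2) (h12 : B e₁ e₂ = 0) :
    reflAlong B (e₁ + (2 : ℚ) • e₂) e₂ = (4 / 5 : ℚ) • e₁ + (3 / 5 : ℚ) • e₂ := by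
  have h21 : B e₂ e₁ = 0 := (hsymm _ _).trans h12
  simp only [reflAlong, map_add, map_smul, LinearMap.add_apply, LinearMap.smul_apply,
    smul_eq_mul, h11, h22, h12, h21, smul_add, smul_smul]
  module

end reflAlong

theorem refl_conj_values_general
    (V : Type*) [AddCommGroup V] [Module ℚ V]
    (B : V →ₗ[ℚ] V →ₗ[ℚ] ℚ) (hsymm : ∀ x y : V, B x y = B y x)
    (e₁ e₂ ν : V)
    (h11 : B e₁ e₁ = -2) (h22 : B e₂ e₂ = -2) (h12 : B e₁ e₂ = 0)
    (hν1 : B ν e₁ = 0) (hν2 : B ν e₂ = 0)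
    (a₁ a₂ : ℤ) (ξ ζ : V)
    (hξ : ξ = (a₁ : ℚ) • e₁ + (a₂ : ℚ) • e₂ + ν)
    (hξξ : B ξ ξ = -2)
    (hζ : ζ = e₁ + (2 : ℚ) • e₂) :
    B (reflAlong B ζ (reflAlong B ξ (reflAlong B ζ e₁))) e₁ =
      -(2 / 25) * ((18 * a₁ ^ 2 - 48 * a₁ * a₂ + 32 * a₂ ^ 2 - 25 : ℤ) : ℚ) ∧
    B (reflAlong B ζ (reflAlong B ξ (reflAlong B ζ e₁))) e₂ =
      (2 / 25) * ((24 * a₁ ^ 2 - 14 * a₁ * a₂ - 24 * a₂ ^ 2 : ℤ) : ℚ) ∧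
    (18 * a₁ ^ 2 - 48 * a₁ * a₂ + 32 * a₂ ^ 2 : ℤ) = 2 * (3 * a₁ - 4 * a₂) ^ 2 := by
  have h21 : B e₂ e₁ = 0 := (hsymm _ _).trans h12
  have hξe₁ : B e₁ ξ = -2 * a₁ := by
    simp only [hξ, map_add, map_smul, smul_eq_mul, h11, h12, (hsymm _ _).trans hν1]
    ring
  have hξe₂ : B e₂ ξ = -2 * a₂ := by
    simp only [hξ, map_add, map_smul, smul_eq_mul, h21, h22, (hsymm _ _).trans hν2]
    ring
  have hu := reflAlong_add_two_smul_apply_left hsymm h11 h22 h12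
  have hw := reflAlong_add_two_smul_apply_right hsymm h11 h22 h12
  refine ⟨?_, ?_, by ring⟩ <;>
  · rw [← apply_reflAlong hsymm, reflAlong_apply_left_of_self_eq_neg_two hsymm hξξ, hζ]
    simp only [hu, hw, map_add, map_smul, LinearMap.add_apply, LinearMap.smul_apply,
      smul_eq_mul, h11, h22, h12, h21, hξe₁, hξe₂]
    push_cast
    ring

/-- with `e₁, e₂` of square `−2`, orthogonal, `ζ = e₁ + 2e₂`,
`ξ = a₁e₁ + a₂e₂ + ν` (`ν ⊥ e₁, e₂`) of square `−2`, one has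
`(r_ζ∘r_ξ∘r_ζ(e₁), e₁) = −(2/25)(18a₁² − 48a₁a₂ + 32a₂² − 25)`,
`(r_ζ∘r_ξ∘r_ζ(e₁), e₂) = (2/25)(24a₁² − 14a₁a₂ − 24a₂²)`, and
`18a₁² − 48a₁a₂ + 32a₂² = 2(3a₁ − 4a₂)²`. -/
theorem refl_conj_values
    (V : Type*) [AddCommGroup V] [Module ℚ V]
    (B : V →ₗ[ℚ] V →ₗ[ℚ] ℚ) (hsymm : ∀ x y : V, B x y = B y x)
    (L : Submodule ℤ V) [Module.Free ℤ (↥L)] [Module.Finite ℤ (↥L)]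
    (hint : ∀ x ∈ L, ∀ y ∈ L, ∃ n : ℤ, B x y = (n : ℚ))
    (e₁ e₂ ν : V) (he₁ : e₁ ∈ L) (he₂ : e₂ ∈ L) (hν : ν ∈ L)
    (h11 : B e₁ e₁ = -2) (h22 : B e₂ e₂ = -2) (h12 : B e₁ e₂ = 0)
    (hν1 : B ν e₁ = 0) (hν2 : B ν e₂ = 0)
    (a₁ a₂ : ℤ) (ξ ζ : V)
    (hξ : ξ = (a₁ : ℚ) • e₁ + (a₂ : ℚ) • e₂ + ν)
    (hξξ : B ξ ξ = -2)
    (hζ : ζ = e₁ + (2 : ℚ) • e₂) :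
    B (reflAlong B ζ (reflAlong B ξ (reflAlong B ζ e₁))) e₁ =
      -(2 / 25) * ((18 * a₁ ^ 2 - 48 * a₁ * a₂ + 32 * a₂ ^ 2 - 25 : ℤ) : ℚ) ∧
    B (reflAlong B ζ (reflAlong B ξ (reflAlong B ζ e₁))) e₂ =
      (2 / 25) * ((24 * a₁ ^ 2 - 14 * a₁ * a₂ - 24 * a₂ ^ 2 : ℤ) : ℚ) ∧
    (18 * a₁ ^ 2 - 48 * a₁ * a₂ + 32 * a₂ ^ 2 : ℤ) = 2 * (3 * a₁ - 4 * a₂) ^ 2 :=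
  refl_conj_values_general V B hsymm e₁ e₂ ν h11 h22 h12 hν1 hν2 a₁ a₂ ξ ζ hξ hξξ hζ
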